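/- arXiv:2306.04219 — 2 statements merged into one kernel-verified Lean document; each statement's English description precedes it below -/
import Mathlib

section
/- Let V be a finite type with two distinct distinguished vertices o and o′, and let E ⊆ V × V be a set of arcs with no self-loops such that: no arc of E enters o and no arc of E leaves o′; exactly one arc of E leaves o; exactly one arc of E enters o′; and every vertex v ∉ {o, o′} has its in-degree in E equal to its out-degree in E. If E contains no directed cycle, then the arcs of E form a simple directed path from o to o′: there is a duplicate-free list of vertices o = v₀, v₁, …, v_n = o′ with n ≥ 1 such that E is exactly the set {(v_i, v_{i+1}) : 0 ≤ i < n}. -/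
private lemma cycle_of_walk {V : Type*} [Fintype V] (E : Finset (V × V))
    (f : ℕ → V) (hf : ∀ i, (f i, f (i + 1)) ∈ E) :
    ∃ (k : ℕ) (v : ℕ → V), 1 ≤ k ∧ v k = v 0 ∧ ∀ i < k, (v i, v (i + 1)) ∈ E := by
  obtain ⟨i, j, hne, heq⟩ := Finite.exists_ne_map_eq_of_infinite f
  rcases hne.lt_or_gt with hij | hij
  · refine ⟨j - i, fun m => f (i + m), by omega, ?_, ?_⟩
    · have h1 : i + (j - i) = j := by omega
      simp [h1, heq]
    · intro m hm
      have h2 : i + m + 1 = i + (m + 1) := by ring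
      simpa [h2] using hf (i + m)
  · refine ⟨i - j, fun m => f (j + m), by omega, ?_, ?_⟩
    · have h1 : j + (i - j) = i := by omega
      simp [h1, heq]
    · intro m hm
      have h2 : j + m + 1 = j + (m + 1) := by ring
      simpa [h2] using hf (j + m)

private lemma walk_exists {V : Type*} (E : Finset (V × V)) (P : V → Prop) (s : V) (hs : P s)
    (h : ∀ v, P v → ∃ w, (v, w) ∈ E ∧ P w) :
    ∃ f : ℕ → V, f 0 = s ∧ ∀ i, (f i, f (i + 1)) ∈ E := by
  choose g hg1 hg2 using h
  let F : ℕ → {v : V // P v} :=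
    fun n => Nat.rec ⟨s, hs⟩ (fun _ p => ⟨g p.1 p.2, hg2 p.1 p.2⟩) n
  exact ⟨fun n => (F n).1, rfl, fun i => hg1 _ _⟩

/-- Degree/flow-conservation constraints together with the absence of directed cycles
force the arc set `E` to be a single simple directed path from `o` to `o'`. -/
theorem arcs_form_simple_path_of_no_cycle
    {V : Type*} [Fintype V] [DecidableEq V] (o o' : V) (hoo' : o ≠ o')
    (E : Finset (V × V))
    (h_noloop : ∀ v : V, (v, v) ∉ E)
    (h_no_in_o : ∀ u : V, (u, o) ∉ E)
    (h_no_out_o' : ∀ v : V, (o', v) ∉ E)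
    (h_out_o : (E.filter (fun e => e.1 = o)).card = 1)
    (h_in_o' : (E.filter (fun e => e.2 = o')).card = 1)
    (h_balance : ∀ v : V, v ≠ o → v ≠ o' →
      (E.filter (fun e => e.2 = v)).card = (E.filter (fun e => e.1 = v)).card)
    (h_acyclic : ¬ ∃ (k : ℕ) (v : ℕ → V), 1 ≤ k ∧ v k = v 0 ∧
      ∀ i < k, (v i, v (i + 1)) ∈ E) :
    ∃ (n : ℕ) (v : ℕ → V), 1 ≤ n ∧ v 0 = o ∧ v n = o' ∧
      (∀ i ≤ n, ∀ j ≤ n, v i = v j → i = j) ∧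
      (∀ e : V × V, e ∈ E ↔ ∃ i < n, e = (v i, v (i + 1))) := by
  classical
  -- a vertex that is `o` or has an incoming arc, and is not `o'`, has an outgoing arc
  have hout : ∀ v : V, v ≠ o' → (v = o ∨ ∃ u, (u, v) ∈ E) → ∃ z, (v, z) ∈ E := by
    intro v hv hv2
    have hcard : 0 < (E.filter (fun e => e.1 = v)).card := by
      rcases hv2 with rfl | ⟨u, hu⟩
      · omega
      · have hvo : v ≠ o := fun h => h_no_in_o u (h ▸ hu)
        have h1 : 0 < (E.filter (fun e => e.2 = v)).card :=
          Finset.card_pos.mpr ⟨(u, v), by simp [Finset.mem_filter, hu]⟩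
        rw [← h_balance v hvo hv]; exact h1
    obtain ⟨e, he⟩ := Finset.card_pos.mp hcard
    simp only [Finset.mem_filter] at he
    exact ⟨e.2, by rw [← he.2]; exact he.1⟩
  -- the step function and the walk from o
  let nxt : V → V := fun v => if h : ∃ z, (v, z) ∈ E then h.choose else v
  have hnxt : ∀ v : V, (∃ z, (v, z) ∈ E) → (v, nxt v) ∈ E := by
    intro v h
    simp only [nxt, dif_pos h]
    exact h.choose_spec
  let w : ℕ → V := fun n => nxt^[n] o
  have hw0 : w 0 = o := rfl
  have hwsucc : ∀ n, w (n + 1) = nxt (w n) := by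
    intro n; simp [w, Function.iterate_succ_apply']
  have harc : ∀ n, (∀ m ≤ n, w m ≠ o') → (w n, w (n + 1)) ∈ E := by
    intro n
    induction n with
    | zero =>
      intro hn
      rw [hwsucc 0]
      exact hnxt _ (hout (w 0) (hn 0 le_rfl) (Or.inl hw0))
    | succ n ih =>
      intro hn
      have hprev : (w n, w (n + 1)) ∈ E := ih (fun m hm => hn m (by omega))
      rw [hwsucc (n + 1)]
      exact hnxt _ (hout (w (n + 1)) (hn (n + 1) le_rfl) (Or.inr ⟨w n, hprev⟩))
  -- the walk reaches o'
  have hreach : ∃ n, w n = o' := by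
    by_contra hcon
    push_neg at hcon
    exact h_acyclic (cycle_of_walk E w (fun i => harc i (fun m _ => hcon m)))
  set n := Nat.find hreach with hn_def
  have hwn : w n = o' := Nat.find_spec hreach
  have hmin : ∀ m < n, w m ≠ o' := fun m hm => Nat.find_min hreach hm
  have hn1 : 1 ≤ n := by
    rcases Nat.eq_zero_or_pos n with h0 | h
    · exact absurd (h0 ▸ hwn) (hw0 ▸ hoo')
    · exact h
  have harc' : ∀ i < n, (w i, w (i + 1)) ∈ E := by
    intro i hi
    exact harc i (fun m hm => hmin m (lt_of_le_of_lt hm hi))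
  -- injectivity of w on [0,n]
  have hlt : ∀ i j, i < j → j ≤ n → w i ≠ w j := by
    intro i j hij hj heq
    refine h_acyclic ⟨j - i, fun m => w (i + m), by omega, ?_, ?_⟩
    · have h1 : i + (j - i) = j := by omega
      simp [h1, heq]
    · intro m hm
      have h2 : i + m + 1 = i + (m + 1) := by ring
      have h3 : i + m < n := by omega
      simpa [h2] using harc' (i + m) h3
  have hinj : ∀ i ≤ n, ∀ j ≤ n, w i = w j → i = j := by
    intro i hi j hj heq
    rcases lt_trichotomy i j with h | h | h
    · exact absurd heq (hlt i j h hj)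
    · exact h
    · exact absurd heq.symm (hlt j i h hi)
  -- the path arc set
  set P : Finset (V × V) := (Finset.range n).image (fun i => (w i, w (i + 1))) with hP_def
  have hmemP : ∀ e : V × V, e ∈ P ↔ ∃ i < n, e = (w i, w (i + 1)) := by
    intro e
    simp only [hP_def, Finset.mem_image, Finset.mem_range]
    constructor
    · rintro ⟨i, hi, rfl⟩; exact ⟨i, hi, rfl⟩
    · rintro ⟨i, hi, rfl⟩; exact ⟨i, hi, rfl⟩
  have hPE : P ⊆ E := by
    intro e he
    obtain ⟨i, hi, rfl⟩ := (hmemP e).mp he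
    exact harc' i hi
  -- count path arcs out of / into a vertex
  have hPout : ∀ i < n, P.filter (fun e => e.1 = w i) = {(w i, w (i + 1))} := by
    intro i hi
    ext e
    simp only [Finset.mem_filter, hmemP, Finset.mem_singleton]
    constructor
    · rintro ⟨⟨j, hj, rfl⟩, h1⟩
      have : j = i := hinj j (by omega) i (by omega) h1
      subst this; rfl
    · rintro rfl; exact ⟨⟨i, hi, rfl⟩, rfl⟩
  have hPin : ∀ i < n, P.filter (fun e => e.2 = w (i + 1)) = {(w i, w (i + 1))} := by
    intro i hi
    ext e
    simp only [Finset.mem_filter, hmemP, Finset.mem_singleton]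
    constructor
    · rintro ⟨⟨j, hj, rfl⟩, h1⟩
      have : j + 1 = i + 1 := hinj (j + 1) (by omega) (i + 1) (by omega) h1
      have : j = i := by omega
      subst this; rfl
    · rintro rfl; exact ⟨⟨i, hi, rfl⟩, rfl⟩
  have hPout0 : ∀ v : V, (∀ i < n, w i ≠ v) → P.filter (fun e => e.1 = v) = ∅ := by
    intro v hv
    rw [Finset.filter_eq_empty_iff]
    intro e he
    obtain ⟨i, hi, rfl⟩ := (hmemP e).mp he
    exact hv i hi
  have hPin0 : ∀ v : V, (∀ i < n, w (i + 1) ≠ v) → P.filter (fun e => e.2 = v) = ∅ := by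
    intro v hv
    rw [Finset.filter_eq_empty_iff]
    intro e he
    obtain ⟨i, hi, rfl⟩ := (hmemP e).mp he
    exact hv i hi
  -- the leftover arcs
  set E' : Finset (V × V) := E \ P with hE'_def
  have hcard' : ∀ (p : V × V → Prop) [DecidablePred p],
      (E'.filter p).card = (E.filter p).card - (P.filter p).card := by
    intro p _
    have h1 : E'.filter p = E.filter p \ P.filter p := by
      ext e
      simp only [hE'_def, Finset.mem_filter, Finset.mem_sdiff]
      tauto
    rw [h1, Finset.card_sdiff_of_subset (Finset.filter_subset_filter p hPE)]
  -- E' is balanced at every vertex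
  have hbal' : ∀ v : V, (E'.filter (fun e => e.2 = v)).card = (E'.filter (fun e => e.1 = v)).card := by
    intro v
    by_cases hvo : v = o
    · subst hvo
      have hin : E.filter (fun e => e.2 = v) = ∅ := by
        rw [Finset.filter_eq_empty_iff]
        intro e he h
        have h2 : (e.1, e.2) ∈ E := by simpa using he
        rw [h] at h2
        exact h_no_in_o e.1 h2
      have hpo : P.filter (fun e => e.1 = v) = {(v, w 1)} := by
        have := hPout 0 (by omega)
        rwa [hw0] at this
      rw [hcard' (fun e => e.2 = v), hcard' (fun e => e.1 = v), hin, hpo, h_out_o]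
      simp
    · by_cases hvo' : v = o'
      · subst hvo'
        have hout' : E.filter (fun e => e.1 = v) = ∅ := by
          rw [Finset.filter_eq_empty_iff]
          intro e he h
          have h2 : (e.1, e.2) ∈ E := by simpa using he
          rw [h] at h2
          exact h_no_out_o' e.2 h2
        have hpi : P.filter (fun e => e.2 = v) = {(w (n - 1), v)} := by
          have h1 : n - 1 < n := by omega
          have h2 : n - 1 + 1 = n := by omega
          have := hPin (n - 1) h1
          rwa [h2, hwn] at this
        rw [hcard' (fun e => e.2 = v), hcard' (fun e => e.1 = v), hout', hpi, h_in_o']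
        simp
      · by_cases hv : ∃ i, 0 < i ∧ i < n ∧ w i = v
        · obtain ⟨i, hi0, hin', rfl⟩ := hv
          have hpo : P.filter (fun e => e.1 = w i) = {(w i, w (i + 1))} := hPout i hin'
          have hpi : P.filter (fun e => e.2 = w i) = {(w (i - 1), w i)} := by
            have h1 : i - 1 < n := by omega
            have h2 : i - 1 + 1 = i := by omega
            have := hPin (i - 1) h1
            rwa [h2] at this
          rw [hcard' (fun e => e.2 = w i), hcard' (fun e => e.1 = w i), hpo, hpi,
            h_balance (w i) hvo hvo']
          simp
        · push_neg at hv
          have hp0 : P.filter (fun e => e.1 = v) = ∅ := by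
            apply hPout0
            intro i hi
            rcases Nat.eq_zero_or_pos i with h0 | h0
            · subst h0; rw [hw0]; exact fun h => hvo h.symm
            · exact fun h => (hv i h0 hi h).elim
          have hp1 : P.filter (fun e => e.2 = v) = ∅ := by
            apply hPin0
            intro i hi h
            rcases Nat.lt_or_ge (i + 1) n with h1 | h1
            · exact hv (i + 1) (by omega) h1 h
            · have : i + 1 = n := by omega
              exact hvo' (by rw [← h, this, hwn])
          rw [hcard' (fun e => e.2 = v), hcard' (fun e => e.1 = v), hp0, hp1,
            h_balance v hvo hvo']
  -- E' is empty
  have hE'empty : E' = ∅ := by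
    by_contra hne
    obtain ⟨e, he⟩ := Finset.nonempty_iff_ne_empty.mpr hne
    obtain ⟨f, hf0, hf⟩ := walk_exists E' (fun v => ∃ u, (u, v) ∈ E') e.2 ⟨e.1, by simpa using he⟩
      (by
        intro v ⟨u, hu⟩
        have h1 : 0 < (E'.filter (fun e => e.2 = v)).card :=
          Finset.card_pos.mpr ⟨(u, v), by simp [Finset.mem_filter, hu]⟩
        rw [hbal' v] at h1
        obtain ⟨e', he'⟩ := Finset.card_pos.mp h1
        simp only [Finset.mem_filter] at he'
        refine ⟨e'.2, ?_, e'.1, by simpa using he'.1⟩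
        have h2 : (e'.1, e'.2) ∈ E' := by simpa using he'.1
        rwa [he'.2] at h2)
    have hfE : ∀ i, (f i, f (i + 1)) ∈ E := by
      intro i
      have := hf i
      rw [hE'_def, Finset.mem_sdiff] at this
      exact this.1
    exact h_acyclic (cycle_of_walk E f hfE)
  -- conclusion
  refine ⟨n, w, hn1, hw0, hwn, hinj, ?_⟩
  intro e
  constructor
  · intro he
    by_contra hcon
    have heP : e ∉ P := fun h => hcon ((hmemP e).mp h)
    have : e ∈ E' := by rw [hE'_def, Finset.mem_sdiff]; exact ⟨he, heP⟩
    rw [hE'empty] at this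
    exact absurd this (Finset.notMem_empty e)
  · rintro ⟨i, hi, rfl⟩
    exact harc' i hi
end

section
/- Let V be a finite type with two distinct distinguished vertices o and o′, and let E ⊆ V × V be a set of arcs with no self-loops such that: no arc of E enters o and no arc of E leaves o′; exactly one arc of E leaves o; exactly one arc of E enters o′; and every vertex v ∉ {o, o′} has its in-degree in E equal to its out-degree in E. Suppose further there exist t : V → ℝ and ε > 0 with t(v) ≥ t(u) + ε for every (u, v) ∈ E. Then the arcs of E form a simple directed path from o to o′: there is a duplicate-free list of vertices o = v₀, v₁, …, v_n = o′ with n ≥ 1 such that E is exactly the set {(v_i, v_{i+1}) : 0 ≤ i < n}. -/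
/-!
A potential `t` that strictly increases along every arc makes the arc set acyclic, and it does
more. The vertices below a threshold of `t` form a set `S` that no arc enters, so by flow
conservation at most one arc leaves `S`: only `o` has a surplus, of one arc. Taking the threshold
just below `t v` shows that every vertex has in-degree at most one.

The path is then peeled off from `o`. The unique arc `(o, w)` is the only arc entering `w`, so
deleting it leaves a unit flow from `w` to `o'` with one arc fewer. If `w = o'`, what remains is
balanced at every vertex, hence empty, because a nonempty acyclic arc set has an arc ending at a
vertex without outgoing arcs.
-/

open Finset

section

variable {V : Type*} {α : Type*} [LinearOrder α] {E : Finset (V × V)} {e : V × V} {v w o o' : V}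

def IsSimplePath (E : Finset (V × V)) (o o' : V) : Prop :=
  ∃ (n : ℕ) (v : ℕ → V), 1 ≤ n ∧ v 0 = o ∧ v n = o' ∧
    (∀ i ≤ n, ∀ j ≤ n, v i = v j → i = j) ∧
    (∀ e : V × V, e ∈ E ↔ ∃ i < n, e = (v i, v (i + 1)))

theorem isSimplePath_singleton (h : o ≠ o') : IsSimplePath {(o, o')} o o' := by
  refine ⟨1, fun i => if i = 0 then o else o', le_rfl, rfl, rfl, ?_, fun e => ?_⟩
  · intro i hi j hj hij
    interval_cases i <;> interval_cases j <;> simp_all [eq_comm]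
  · simp

variable [DecidableEq V]

theorem IsSimplePath.cons (hp : IsSimplePath E w o') (how : o ≠ w) (ho : ∀ u, (u, o) ∉ E) :
    IsSimplePath (insert (o, w) E) o o' := by
  obtain ⟨n, p, -, rfl, hpn, hinj, harcs⟩ := hp
  have hpo : ∀ j ≤ n, p j ≠ o := by
    rintro (_ | j) hj hpj
    · exact how hpj.symm
    · exact ho (p j) (hpj ▸ (harcs _).2 ⟨j, by omega, rfl⟩)
  refine ⟨n + 1, fun | 0 => o | i + 1 => p i, by omega, rfl, hpn, ?_, fun e => ?_⟩
  · rintro (_ | i) hi (_ | j) hj hij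
    · rfl
    · exact absurd hij.symm (hpo j (by omega))
    · exact absurd hij (hpo i (by omega))
    · simp [hinj i (by omega) j (by omega) hij]
  · rw [mem_insert, harcs, Nat.exists_lt_succ_left]

def outDeg (E : Finset (V × V)) (v : V) : ℕ := #{e ∈ E | e.1 = v}

def inDeg (E : Finset (V × V)) (v : V) : ℕ := #{e ∈ E | e.2 = v}

theorem outDeg_pos_iff : 0 < outDeg E v ↔ ∃ w, (v, w) ∈ E := by
  simp [outDeg, card_pos, Finset.Nonempty]

theorem inDeg_pos_iff : 0 < inDeg E v ↔ ∃ u, (u, v) ∈ E := by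
  simp [inDeg, card_pos, Finset.Nonempty]

theorem outDeg_eq_zero_iff : outDeg E v = 0 ↔ ∀ w, (v, w) ∉ E := by
  simpa using (outDeg_pos_iff (E := E) (v := v)).not

theorem inDeg_eq_zero_iff : inDeg E v = 0 ↔ ∀ u, (u, v) ∉ E := by
  simpa using (inDeg_pos_iff (E := E) (v := v)).not

theorem outDeg_erase (he : e ∈ E) (v : V) :
    outDeg (E.erase e) v = outDeg E v - if e.1 = v then 1 else 0 := by
  unfold outDeg
  rw [filter_erase]
  split_ifs with h
  · exact card_erase_of_mem (mem_filter.2 ⟨he, h⟩)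
  · rw [Nat.sub_zero, erase_eq_of_notMem (by simp [h])]

theorem inDeg_erase (he : e ∈ E) (v : V) :
    inDeg (E.erase e) v = inDeg E v - if e.2 = v then 1 else 0 := by
  unfold inDeg
  rw [filter_erase]
  split_ifs with h
  · exact card_erase_of_mem (mem_filter.2 ⟨he, h⟩)
  · rw [Nat.sub_zero, erase_eq_of_notMem (by simp [h])]

theorem sum_outDeg (S : Finset V) : ∑ v ∈ S, outDeg E v = #{e ∈ E | e.1 ∈ S} :=
  sum_card_fiberwise_eq_card_filter E S Prod.fst

theorem sum_inDeg (S : Finset V) : ∑ v ∈ S, inDeg E v = #{e ∈ E | e.2 ∈ S} :=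
  sum_card_fiberwise_eq_card_filter E S Prod.snd

theorem exists_mem_outDeg_snd_eq_zero {t : V → α} (hE : E.Nonempty)
    (ht : ∀ e ∈ E, t e.1 < t e.2) : ∃ e ∈ E, outDeg E e.2 = 0 := by
  obtain ⟨e, he, hmax⟩ := exists_max_image E (fun e => t e.2) hE
  refine ⟨e, he, outDeg_eq_zero_iff.2 fun w hw => ?_⟩
  exact (ht _ hw).not_ge (hmax _ hw)

theorem eq_empty_of_inDeg_eq_outDeg {t : V → α} (hbal : ∀ v, inDeg E v = outDeg E v)
    (ht : ∀ e ∈ E, t e.1 < t e.2) : E = ∅ := by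
  by_contra hne
  obtain ⟨e, he, hsink⟩ := exists_mem_outDeg_snd_eq_zero (nonempty_iff_ne_empty.2 hne) ht
  have hin : 0 < inDeg E e.2 := inDeg_pos_iff.2 ⟨e.1, he⟩
  rw [hbal] at hin
  omega

structure IsUnitFlow (E : Finset (V × V)) (o o' : V) : Prop where
  inDeg_source : inDeg E o = 0
  outDeg_sink : outDeg E o' = 0
  outDeg_source : outDeg E o = 1
  inDeg_eq_outDeg : ∀ v, v ≠ o → v ≠ o' → inDeg E v = outDeg E v

namespace IsUnitFlow

variable (hf : IsUnitFlow E o o')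
include hf

theorem snd_ne_source (he : e ∈ E) : e.2 ≠ o := by
  intro h
  have := hf.inDeg_source
  rw [← h, inDeg_eq_zero_iff] at this
  exact this e.1 he

theorem outDeg_le_inDeg_add (v : V) : outDeg E v ≤ inDeg E v + if v = o then 1 else 0 := by
  by_cases hvo : v = o
  · simp [hvo, hf.outDeg_source]
  by_cases hvo' : v = o'
  · simp [hvo', hf.outDeg_sink]
  · simp [hvo, hf.inDeg_eq_outDeg v hvo hvo']

/-- Summing `outDeg - inDeg` over `S` counts the arcs leaving `S` minus those entering it. -/
theorem card_leaving_le_one (S : Finset V) (hS : ∀ e ∈ E, e.2 ∈ S → e.1 ∈ S) :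
    #{e ∈ E | e.1 ∈ S ∧ e.2 ∉ S} ≤ 1 := by
  have h_split := card_filter_add_card_filter_not (s := {e ∈ E | e.1 ∈ S}) (fun e => e.2 ∈ S)
  rw [filter_filter, filter_filter] at h_split
  have h_inner : {e ∈ E | e.2 ∈ S} = {e ∈ E | e.1 ∈ S ∧ e.2 ∈ S} :=
    filter_congr fun e he => ⟨fun h => ⟨hS e he h, h⟩, And.right⟩
  have h_sum : ∑ v ∈ S, outDeg E v ≤ ∑ v ∈ S, inDeg E v + 1 :=
    calc ∑ v ∈ S, outDeg E v
        ≤ ∑ v ∈ S, (inDeg E v + if v = o then 1 else 0) :=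
          sum_le_sum fun v _ => hf.outDeg_le_inDeg_add v
      _ = ∑ v ∈ S, inDeg E v + if o ∈ S then 1 else 0 := by rw [sum_add_distrib, sum_ite_eq']
      _ ≤ ∑ v ∈ S, inDeg E v + 1 := by gcongr; split_ifs <;> omega
  rw [sum_outDeg, sum_inDeg, h_inner] at h_sum
  omega

theorem inDeg_le_one {t : V → α} (ht : ∀ e ∈ E, t e.1 < t e.2) (v : V) : inDeg E v ≤ 1 := by
  let S := {u ∈ E.image Prod.fst | t u < t v}
  refine (card_le_card fun e he => ?_).trans (hf.card_leaving_le_one S fun e he h2 => ?_)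
  · obtain ⟨heE, rfl⟩ := mem_filter.1 he
    simp [S, heE, mem_image_of_mem Prod.fst heE, ht e heE]
  · simp only [S, mem_filter] at h2 ⊢
    exact ⟨mem_image_of_mem Prod.fst he, (ht e he).trans h2.2⟩

theorem inDeg_erase_eq_outDeg_erase (how : (o, w) ∈ E) (hvw : v ≠ w) (hvo' : v ≠ o') :
    inDeg (E.erase (o, w)) v = outDeg (E.erase (o, w)) v := by
  rw [inDeg_erase how, outDeg_erase how]
  by_cases hvo : v = o
  · subst hvo
    simp [hf.inDeg_source, hf.outDeg_source]
  · simp [Ne.symm hvw, Ne.symm hvo, hf.inDeg_eq_outDeg v hvo hvo']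

theorem erase {t : V → α} (ht : ∀ e ∈ E, t e.1 < t e.2) (how : (o, w) ∈ E) (hw : w ≠ o') :
    IsUnitFlow (E.erase (o, w)) w o' where
  inDeg_source := by
    rw [inDeg_erase how, if_pos rfl]
    have := hf.inDeg_le_one ht w
    omega
  outDeg_sink := by rw [outDeg_erase how, hf.outDeg_sink, Nat.zero_sub]
  outDeg_source := by
    have hwo : w ≠ o := hf.snd_ne_source how
    have h_in : 0 < inDeg E w := inDeg_pos_iff.2 ⟨o, how⟩
    rw [outDeg_erase how, if_neg hwo.symm, ← hf.inDeg_eq_outDeg w hwo hw]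
    have := hf.inDeg_le_one ht w
    omega
  inDeg_eq_outDeg _ hvw hvo' := hf.inDeg_erase_eq_outDeg_erase how hvw hvo'

theorem eq_singleton {t : V → α} (ht : ∀ e ∈ E, t e.1 < t e.2) (hoo' : (o, o') ∈ E) :
    E = {(o, o')} := by
  have h_rest : E.erase (o, o') = ∅ := by
    refine eq_empty_of_inDeg_eq_outDeg (fun v => ?_) fun e he => ht e (mem_of_mem_erase he)
    by_cases hv : v = o'
    · subst hv
      rw [inDeg_erase hoo', outDeg_erase hoo', hf.outDeg_sink, if_pos rfl]
      have := hf.inDeg_le_one ht v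
      omega
    · exact hf.inDeg_erase_eq_outDeg_erase hoo' hv hv
  exact ((erase_eq_empty_iff _ _).1 h_rest).resolve_left (ne_empty_of_mem hoo')

end IsUnitFlow

theorem IsUnitFlow.isSimplePath {t : V → α} (hf : IsUnitFlow E o o')
    (ht : ∀ e ∈ E, t e.1 < t e.2) : IsSimplePath E o o' := by
  induction E using strongInduction generalizing o with
  | H E ih =>
    obtain ⟨w, how⟩ := outDeg_pos_iff.1 (hf.outDeg_source ▸ Nat.one_pos)
    have hwo : o ≠ w := (hf.snd_ne_source how).symm
    by_cases hwo' : w = o'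
    · subst hwo'
      rw [hf.eq_singleton ht how]
      exact isSimplePath_singleton hwo
    · have ht' : ∀ e ∈ E.erase (o, w), t e.1 < t e.2 := fun e he => ht e (mem_of_mem_erase he)
      have hpath := ih _ (erase_ssubset how) (hf.erase ht how hwo') ht'
      rw [← insert_erase how]
      exact hpath.cons hwo fun u hu => hf.snd_ne_source (mem_of_mem_erase hu) rfl

end

theorem arcs_form_simple_path_of_time_increase_general
    {V : Type*} [DecidableEq V] (o o' : V)
    (E : Finset (V × V))
    (h_no_in_o : ∀ u : V, (u, o) ∉ E)
    (h_no_out_o' : ∀ v : V, (o', v) ∉ E)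
    (h_out_o : (E.filter (fun e => e.1 = o)).card = 1)
    (h_balance : ∀ v : V, v ≠ o → v ≠ o' →
      (E.filter (fun e => e.2 = v)).card = (E.filter (fun e => e.1 = v)).card)
    (h_time : ∃ (t : V → ℝ) (ε : ℝ), 0 < ε ∧ ∀ u v : V, (u, v) ∈ E → t v ≥ t u + ε) :
    ∃ (n : ℕ) (v : ℕ → V), 1 ≤ n ∧ v 0 = o ∧ v n = o' ∧
      (∀ i ≤ n, ∀ j ≤ n, v i = v j → i = j) ∧
      (∀ e : V × V, e ∈ E ↔ ∃ i < n, e = (v i, v (i + 1))) := by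
  obtain ⟨t, ε, hε, ht⟩ := h_time
  have hf : IsUnitFlow E o o' :=
    ⟨inDeg_eq_zero_iff.2 h_no_in_o, outDeg_eq_zero_iff.2 h_no_out_o', h_out_o, h_balance⟩
  exact hf.isSimplePath (t := t) fun e he => by linarith [ht e.1 e.2 he]

/-- Degree/flow-conservation constraints together with time-propagation constraints
(`t v ≥ t u + ε` along every arc, `ε > 0`) force the arc set `E` to be a single simple
directed path from `o` to `o'`. -/
theorem arcs_form_simple_path_of_time_increase
    {V : Type*} [Fintype V] [DecidableEq V] (o o' : V) (hoo' : o ≠ o')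
    (E : Finset (V × V))
    (h_noloop : ∀ v : V, (v, v) ∉ E)
    (h_no_in_o : ∀ u : V, (u, o) ∉ E)
    (h_no_out_o' : ∀ v : V, (o', v) ∉ E)
    (h_out_o : (E.filter (fun e => e.1 = o)).card = 1)
    (h_in_o' : (E.filter (fun e => e.2 = o')).card = 1)
    (h_balance : ∀ v : V, v ≠ o → v ≠ o' →
      (E.filter (fun e => e.2 = v)).card = (E.filter (fun e => e.1 = v)).card)
    (h_time : ∃ (t : V → ℝ) (ε : ℝ), 0 < ε ∧ ∀ u v : V, (u, v) ∈ E → t v ≥ t u + ε) :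
    ∃ (n : ℕ) (v : ℕ → V), 1 ≤ n ∧ v 0 = o ∧ v n = o' ∧
      (∀ i ≤ n, ∀ j ≤ n, v i = v j → i = j) ∧
      (∀ e : V × V, e ∈ E ↔ ∃ i < n, e = (v i, v (i + 1))) :=
  arcs_form_simple_path_of_time_increase_general o o' E h_no_in_o h_no_out_o' h_out_o h_balance
    h_time
end
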